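/- Let (L,E,R,∂₂,∂₁,{,}) be a 2-crossed module of commutative algebras. The maps s₀(r,e) = (r,e,0,0) and s₁(r,e) = (r,0,e,0) from A₁ = R⋉E to A₂ = (R⋉E)⋉_{▶•}(E⋉L) are algebra homomorphisms, and satisfy the simplicial identities d₀∘s₀ = id, d₁∘s₀ = id, d₁∘s₁ = id, d₂∘s₁ = id. -/

import Mathlib

/-! The degeneracies put zeros in the new coordinates. Every term of the multiplication of `A₂`
that involves one of those coordinates vanishes by bilinearity of the actions, of the Peiffer
lifting and of the boundaries, and what survives is the multiplication of `A₁`. -/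

/-- An action of a commutative `k`-algebra `R` on a commutative `k`-algebra `M`:
a `k`-bilinear map satisfying `r▶(mm') = (r▶m)m' = m(r▶m')` and `(rr')▶m = r▶(r'▶m)`. -/
structure AlgAction (k R M : Type*) [CommRing k] [CommRing R] [CommRing M]
    [Algebra k R] [Algebra k M] where
  act : R →ₗ[k] M →ₗ[k] M
  a1 : ∀ (r : R) (m m' : M), act r (m * m') = act r m * m'
  a1' : ∀ (r : R) (m m' : M), act r (m * m') = m * act r m'
  a2 : ∀ (r r' : R) (m : M), act (r * r') m = act r (act r' m)

/-- A 2-crossed module of commutative `k`-algebras, with Peiffer lifting `lift e e' = {e ⊗ e'}`.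
The action `e ▶' l` of `E` on `L` is `lift e (d2 l)` (axiom 2XM5 is definitional). -/
structure TwoCrossedModule (k L E R : Type*) [CommRing k] [CommRing L] [CommRing E] [CommRing R]
    [Algebra k L] [Algebra k E] [Algebra k R] where
  actE : AlgAction k R E
  actL : AlgAction k R L
  d2 : L →ₗ[k] E
  d1 : E →ₗ[k] R
  d2_mul : ∀ l l' : L, d2 (l * l') = d2 l * d2 l'
  d1_mul : ∀ e e' : E, d1 (e * e') = d1 e * d1 e'
  comp : ∀ l : L, d1 (d2 l) = 0
  d1_act : ∀ (r : R) (e : E), d1 (actE.act r e) = r * d1 e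
  d2_act : ∀ (r : R) (l : L), d2 (actL.act r l) = actE.act r (d2 l)
  lift : E →ₗ[k] E →ₗ[k] L
  axm1 : ∀ e e' : E, d2 (lift e e') = e * e' - actE.act (d1 e') e
  axm2 : ∀ l l' : L, lift (d2 l) (d2 l') = l * l'
  axm3 : ∀ e e' e'' : E, lift e (e' * e'') = lift (e * e') e'' + actL.act (d1 e'') (lift e e')
  axm4 : ∀ (l : L) (e : E), lift (d2 l) e = lift e (d2 l) - actL.act (d1 e) l
  axm6a : ∀ (r : R) (e e' : E), actL.act r (lift e e') = lift (actE.act r e) e'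
  axm6b : ∀ (r : R) (e e' : E), actL.act r (lift e e') = lift e (actE.act r e')

namespace TwoCrossedModule

variable {k L E R : Type*} [CommRing k] [CommRing L] [CommRing E] [CommRing R]
  [Algebra k L] [Algebra k E] [Algebra k R] (T : TwoCrossedModule k L E R)

def mulA₁ (p q : R × E) : R × E :=
  (p.1 * q.1, T.actE.act p.1 q.2 + T.actE.act q.1 p.2 + p.2 * q.2)

def mulA₂ (p q : (R × E) × (E × L)) : (R × E) × (E × L) :=
  (T.mulA₁ p.1 q.1,
    (p.1.2 * q.2.1 + T.actE.act p.1.1 q.2.1,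
      T.actL.act (T.d1 p.1.2) q.2.2 + T.actL.act p.1.1 q.2.2 - T.lift q.2.1 p.1.2)
    + (q.1.2 * p.2.1 + T.actE.act q.1.1 p.2.1,
      T.actL.act (T.d1 q.1.2) p.2.2 + T.actL.act q.1.1 p.2.2 - T.lift p.2.1 q.1.2)
    + (p.2.1 * q.2.1,
      T.lift p.2.1 (T.d2 q.2.2) + T.lift q.2.1 (T.d2 p.2.2) + p.2.2 * q.2.2))

theorem mulA₂_degen₀ (p q : R × E) : T.mulA₂ (p, 0) (q, 0) = (T.mulA₁ p q, 0) := by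
  simp [mulA₂]

theorem mulA₂_degen₁ (p q : R × E) :
    T.mulA₂ ((p.1, 0), (p.2, 0)) ((q.1, 0), (q.2, 0)) =
      (((T.mulA₁ p q).1, 0), ((T.mulA₁ p q).2, 0)) := by
  simp [mulA₂, mulA₁, add_comm, mul_comm]

end TwoCrossedModule

def degen₁ (k L E R : Type*) [CommRing k] [CommRing L] [CommRing E] [CommRing R]
    [Algebra k L] [Algebra k E] [Algebra k R] : R × E →ₗ[k] (R × E) × (E × L) :=
  (LinearMap.inl k R E ∘ₗ LinearMap.fst k R E).prod (LinearMap.inl k E L ∘ₗ LinearMap.snd k R E)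

theorem stmt8 (k L E R : Type*) [CommRing k] [CommRing L] [CommRing E] [CommRing R]
    [Algebra k L] [Algebra k E] [Algebra k R] (T : TwoCrossedModule k L E R) :
    ∀ (m1 : R × E → R × E → R × E)
      (mul2 : (R × E) × (E × L) → (R × E) × (E × L) → (R × E) × (E × L))
      (d0 d1 d2 : (R × E) × (E × L) → R × E)
      (s0 s1 : R × E → (R × E) × (E × L)),
      (m1 = fun p q => (p.1 * q.1, T.actE.act p.1 q.2 + T.actE.act q.1 p.2 + p.2 * q.2)) →
      (mul2 = fun p q => (m1 p.1 q.1,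
        (p.1.2 * q.2.1 + T.actE.act p.1.1 q.2.1,
          T.actL.act (T.d1 p.1.2) q.2.2 + T.actL.act p.1.1 q.2.2 - T.lift q.2.1 p.1.2)
        + (q.1.2 * p.2.1 + T.actE.act q.1.1 p.2.1,
          T.actL.act (T.d1 q.1.2) p.2.2 + T.actL.act q.1.1 p.2.2 - T.lift p.2.1 q.1.2)
        + (p.2.1 * q.2.1,
          T.lift p.2.1 (T.d2 q.2.2) + T.lift q.2.1 (T.d2 p.2.2) + p.2.2 * q.2.2))) →
      (d0 = fun p => p.1) →
      (d1 = fun p => (p.1.1, p.1.2 + p.2.1)) →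
      (d2 = fun p => (p.1.1 + T.d1 p.1.2, p.2.1 + T.d2 p.2.2)) →
      (s0 = fun p => (p, (0, 0))) →
      (s1 = fun p => ((p.1, 0), (p.2, 0))) →
      ((∀ p q, s0 (p + q) = s0 p + s0 q) ∧ (∀ (c : k) p, s0 (c • p) = c • s0 p) ∧
        (∀ p q, s0 (m1 p q) = mul2 (s0 p) (s0 q))) ∧
      ((∀ p q, s1 (p + q) = s1 p + s1 q) ∧ (∀ (c : k) p, s1 (c • p) = c • s1 p) ∧
        (∀ p q, s1 (m1 p q) = mul2 (s1 p) (s1 q))) ∧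
      (∀ p, d0 (s0 p) = p) ∧ (∀ p, d1 (s0 p) = p) ∧
      (∀ p, d1 (s1 p) = p) ∧ (∀ p, d2 (s1 p) = p) := by
  intro m1 mul2 d0 d1 d2 s0 s1 hm1 hmul2 hd0 hd1 hd2 hs0 hs1
  subst hm1 hmul2 hd0 hd1 hd2 hs0 hs1
  exact ⟨⟨(LinearMap.inl k (R × E) (E × L)).map_add, (LinearMap.inl k (R × E) (E × L)).map_smul,
      fun p q => (T.mulA₂_degen₀ p q).symm⟩,
    ⟨(degen₁ k L E R).map_add, (degen₁ k L E R).map_smul, fun p q => (T.mulA₂_degen₁ p q).symm⟩,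
    fun _ => rfl, fun _ => Prod.ext rfl (add_zero _), fun _ => Prod.ext rfl (zero_add _),
    fun _ => by simp⟩
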